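/- If (W_1,…,W_m) is a Hall partition of F and W ⊆ X is a critical and non-reducible set of F, then W = W_i for some 1 ≤ i ≤ m. -/
import Mathlib

open Finset
open scoped Classical

variable {α β : Type*}

section Defs
variable [DecidableEq α] [DecidableEq β]

/-- Image of a set under a set-valued mapping. -/
def im (F : α → Finset β) (W : Finset α) : Finset β := W.biUnion F

/-- Complement mapping `F_W : x ↦ F(x) \ F(W)`. -/
def cmap (F : α → Finset β) (W : Finset α) : α → Finset β := fun x => F x \ im F W

/-- Hall condition of a set-valued mapping on a domain `D`. -/
def HallOn (F : α → Finset β) (D : Finset α) : Prop := ∀ W ⊆ D, W.card ≤ (im F W).card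

/-- A critical set: nonempty with `♯F(W) = ♯W`. -/
def Critical (F : α → Finset β) (W : Finset α) : Prop := W.Nonempty ∧ (im F W).card = W.card

/-- A non-reducible set: nonempty with no proper critical subset. -/
def NonReducible (F : α → Finset β) (W : Finset α) : Prop :=
  W.Nonempty ∧ ∀ V, V ⊂ W → ¬ Critical F V

/-- Union of the first `i` parts: `⋃_{j<i} W_j`. -/
def pre {m : ℕ} (W : Fin m → Finset α) (i : Fin m) : Finset α :=
  (Finset.univ.filter (fun j => j.val < i.val)).biUnion W

/-- Hall partition of `F` on the whole domain. -/
def IsHallPartition [Fintype α] (F : α → Finset β) {m : ℕ} (W : Fin m → Finset α) : Prop :=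
  (∀ i j, i ≠ j → Disjoint (W i) (W j)) ∧
  (Finset.univ.biUnion W = Finset.univ) ∧
  (∀ i, ∀ x ∈ W i, (cmap F (pre W i) x).Nonempty) ∧
  (∀ i, NonReducible (cmap F (pre W i)) (W i)) ∧
  (∀ i : Fin m, i.val < m - 1 → Critical (cmap F (pre W i)) (W i))

/-- The alldifferent kernel `F^*`. -/
noncomputable def kernel [Fintype α] (F : α → Finset β) : α → Finset β :=
  fun x => (F x).filter (fun y => ∃ s : α → β, Function.Injective s ∧ (∀ z, s z ∈ F z) ∧ s x = y)

end Defs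

section AuxLemmas
variable [DecidableEq α] [DecidableEq β]

lemma im_union (F : α → Finset β) (A B : Finset α) : im F (A ∪ B) = im F A ∪ im F B := by
  ext y; simp only [im, mem_biUnion, mem_union]
  constructor
  · rintro ⟨a, ha | ha, hy⟩
    · exact Or.inl ⟨a, ha, hy⟩
    · exact Or.inr ⟨a, ha, hy⟩
  · rintro (⟨a, ha, hy⟩ | ⟨a, ha, hy⟩)
    · exact ⟨a, Or.inl ha, hy⟩
    · exact ⟨a, Or.inr ha, hy⟩

lemma im_mono (F : α → Finset β) {A B : Finset α} (h : A ⊆ B) : im F A ⊆ im F B :=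
  Finset.biUnion_subset_biUnion_of_subset_left _ h

lemma im_cmap (F : α → Finset β) (D B : Finset α) :
    im (cmap F D) B = im F B \ im F D := by
  ext y; simp only [im, cmap, mem_biUnion, mem_sdiff]; tauto

lemma hall_of_nonReducible (G : α → Finset β) (S : Finset α)
    (hne : ∀ x ∈ S, (G x).Nonempty)
    (hnr : ∀ V, V ⊂ S → ¬ Critical G V) : HallOn G S := by
  intro U
  induction U using Finset.strongInduction with
  | _ U ih =>
    intro hU
    by_contra hlt
    push_neg at hlt
    have hUne : U.Nonempty := card_pos.mp (by omega)
    obtain ⟨u, hu⟩ := hUne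
    have hss : U.erase u ⊂ U := erase_ssubset hu
    have h1 : (U.erase u).card ≤ (im G (U.erase u)).card := ih _ hss (hss.subset.trans hU)
    have h2 : (im G (U.erase u)).card ≤ (im G U).card := card_le_card (im_mono G hss.subset)
    have hcard : (U.erase u).card = U.card - 1 := card_erase_of_mem hu
    rcases (U.erase u).eq_empty_or_nonempty with he | hne'
    · have hGu : (G u).Nonempty := hne u (hU hu)
      have h3 : (G u).card ≤ (im G U).card :=
        card_le_card (fun y hy => mem_biUnion.mpr ⟨u, hu, hy⟩)
      have h4 : 0 < (G u).card := card_pos.mpr hGu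
      have h5 : (U.erase u).card = 0 := by rw [he]; rfl
      have h6 : 1 ≤ U.card := card_pos.mpr ⟨u, hu⟩
      omega
    · exact hnr _ (lt_of_lt_of_le hss hU) ⟨hne', by omega⟩

lemma hall_step (F : α → Finset β) (D S : Finset α)
    (hD : HallOn F D) (hS : HallOn (cmap F D) S) : HallOn F (D ∪ S) := by
  intro U hU
  have hUAB : U ∩ D ∪ U \ D = U := by
    ext x; simp only [mem_union, mem_inter, mem_sdiff]; tauto
  have hBS : U \ D ⊆ S := by
    intro x hx
    rcases mem_union.mp (hU (mem_sdiff.mp hx).1) with h | h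
    · exact absurd h (mem_sdiff.mp hx).2
    · exact h
  have h1 : (U ∩ D).card ≤ (im F (U ∩ D)).card := hD _ inter_subset_right
  have h2 : (U \ D).card ≤ (im (cmap F D) (U \ D)).card := hS _ hBS
  have hsub : im F (U ∩ D) ∪ im (cmap F D) (U \ D) ⊆ im F U := by
    have him : im F U = im F (U ∩ D) ∪ im F (U \ D) := by
      conv_lhs => rw [← hUAB]
      rw [im_union]
    rw [im_cmap, him]
    exact union_subset_union (Finset.Subset.refl _) sdiff_subset
  have hd2 : Disjoint (im F (U ∩ D)) (im (cmap F D) (U \ D)) := by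
    rw [im_cmap]
    exact Disjoint.mono_left (im_mono F inter_subset_right) disjoint_sdiff
  have h3 : (im F (U ∩ D)).card + (im (cmap F D) (U \ D)).card ≤ (im F U).card := by
    rw [← card_union_of_disjoint hd2]
    exact card_le_card hsub
  have h4 : (U ∩ D).card + (U \ D).card = U.card := card_inter_add_card_sdiff U D
  omega

/-- Union of the first `n` parts, with a natural-number index. -/
def preN {m : ℕ} (W : Fin m → Finset α) (n : ℕ) : Finset α :=
  (Finset.univ.filter (fun j : Fin m => j.val < n)).biUnion W

lemma pre_eq_preN {m : ℕ} (W : Fin m → Finset α) (i : Fin m) : pre W i = preN W i.val := rfl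

lemma hall_preN [Fintype α] (F : α → Finset β) {m : ℕ} (W : Fin m → Finset α)
    (hHP : IsHallPartition F W) : ∀ n, HallOn F (preN W n) := by
  intro n
  induction n with
  | zero =>
    intro U hU
    have : U = ∅ := subset_empty.mp (by simpa [preN] using hU)
    simp [this]
  | succ n ih =>
    by_cases hn : n < m
    · have hsucc : preN W (n + 1) = preN W n ∪ W ⟨n, hn⟩ := by
        ext x
        simp only [preN, mem_biUnion, mem_filter, mem_union, mem_univ, true_and]
        constructor
        · rintro ⟨j, hj, hx⟩
          rcases Nat.lt_succ_iff_lt_or_eq.mp hj with h | h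
          · exact Or.inl ⟨j, h, hx⟩
          · right; have : j = ⟨n, hn⟩ := Fin.ext h; rwa [this] at hx
        · rintro (⟨j, hj, hx⟩ | hx)
          · exact ⟨j, Nat.lt_succ_of_lt hj, hx⟩
          · exact ⟨⟨n, hn⟩, Nat.lt_succ_self n, hx⟩
      rw [hsucc]
      refine hall_step F _ _ ih (hall_of_nonReducible _ _ ?_ ?_)
      · exact hHP.2.2.1 ⟨n, hn⟩
      · exact (hHP.2.2.2.1 ⟨n, hn⟩).2
    · have he : preN W (n + 1) = preN W n := by
        ext x
        simp only [preN, mem_biUnion, mem_filter, mem_univ, true_and]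
        constructor
        · rintro ⟨j, hj, hx⟩
          exact ⟨j, by have := j.isLt; omega, hx⟩
        · rintro ⟨j, hj, hx⟩
          exact ⟨j, by omega, hx⟩
      rw [he]; exact ih

end AuxLemmas

theorem stmt17 [Fintype α] [Nonempty α] [DecidableEq α] [Fintype β] [Nonempty β] [DecidableEq β]
    (F : α → Finset β) {m : ℕ} (W : Fin m → Finset α) (hHP : IsHallPartition F W)
    (V : Finset α) (hVc : Critical F V) (hVnr : NonReducible F V) :
    ∃ i : Fin m, V = W i := by
  obtain ⟨hVne, hVcard⟩ := hVc
  have hmem : ∀ x : α, ∃ j, x ∈ W j := by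
    intro x
    have hx : x ∈ Finset.univ.biUnion W := by rw [hHP.2.1]; exact mem_univ x
    simpa using (mem_biUnion.mp hx)
  have hsne : (univ.filter (fun j : Fin m => (V ∩ W j).Nonempty)).Nonempty := by
    obtain ⟨v, hv⟩ := hVne
    obtain ⟨j, hj⟩ := hmem v
    exact ⟨j, mem_filter.mpr ⟨mem_univ j, ⟨v, mem_inter.mpr ⟨hv, hj⟩⟩⟩⟩
  set i := (univ.filter (fun j : Fin m => (V ∩ W j).Nonempty)).max' hsne with hidef
  have hBne : (V ∩ W i).Nonempty := by
    have := (univ.filter (fun j : Fin m => (V ∩ W j).Nonempty)).max'_mem hsne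
    exact (mem_filter.mp this).2
  have hVsub : V ⊆ pre W i ∪ W i := by
    intro v hv
    obtain ⟨j, hj⟩ := hmem v
    have hji : j ≤ i := le_max' _ j (mem_filter.mpr ⟨mem_univ j, ⟨v, mem_inter.mpr ⟨hv, hj⟩⟩⟩)
    rcases eq_or_lt_of_le hji with h | h
    · exact mem_union_right _ (h ▸ hj)
    · exact mem_union_left _ (mem_biUnion.mpr ⟨j, mem_filter.mpr ⟨mem_univ j, h⟩, hj⟩)
  have hABV : V ∩ pre W i ∪ V ∩ W i = V := by
    rw [← inter_union_distrib_left]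
    exact inter_eq_left.mpr hVsub
  have hDWdisj : Disjoint (pre W i) (W i) := by
    rw [pre, disjoint_biUnion_left]
    intro j hj
    exact hHP.1 j i (Fin.ne_of_lt (mem_filter.mp hj).2)
  have hABdisj : Disjoint (V ∩ pre W i) (V ∩ W i) :=
    Disjoint.mono inter_subset_right inter_subset_right hDWdisj
  have hcardV : (V ∩ pre W i).card + (V ∩ W i).card = V.card := by
    rw [← card_union_of_disjoint hABdisj, hABV]
  have hHallA : (V ∩ pre W i).card ≤ (im F (V ∩ pre W i)).card := by
    have := hall_preN F W hHP i.val
    rw [← pre_eq_preN] at this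
    exact this _ inter_subset_right
  have hHallB : (V ∩ W i).card ≤ (im (cmap F (pre W i)) (V ∩ W i)).card :=
    hall_of_nonReducible _ (W i) (hHP.2.2.1 i) ((hHP.2.2.2.1 i).2) _ inter_subset_right
  have him : im F V = im F (V ∩ pre W i) ∪ im F (V ∩ W i) := by
    conv_lhs => rw [← hABV]
    rw [im_union]
  have hsub : im F (V ∩ pre W i) ∪ im (cmap F (pre W i)) (V ∩ W i) ⊆ im F V := by
    rw [im_cmap, him]
    exact union_subset_union (Finset.Subset.refl _) sdiff_subset
  have hd2 : Disjoint (im F (V ∩ pre W i)) (im (cmap F (pre W i)) (V ∩ W i)) := by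
    rw [im_cmap]
    exact Disjoint.mono_left (im_mono F inter_subset_right) disjoint_sdiff
  have hkey : (im F (V ∩ pre W i)).card + (im (cmap F (pre W i)) (V ∩ W i)).card ≤ V.card := by
    rw [← hVcard, ← card_union_of_disjoint hd2]
    exact card_le_card hsub
  have hAcard : (im F (V ∩ pre W i)).card = (V ∩ pre W i).card := by omega
  have hBcard : (im (cmap F (pre W i)) (V ∩ W i)).card = (V ∩ W i).card := by omega
  have hAe : V ∩ pre W i = ∅ := by
    by_contra hAne
    have hAss : V ∩ pre W i ⊂ V := by
      obtain ⟨b, hb⟩ := hBne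
      refine ssubset_iff_of_subset inter_subset_left |>.mpr ⟨b, (mem_inter.mp hb).1, ?_⟩
      exact disjoint_right.mp hABdisj hb
    exact hVnr.2 _ hAss ⟨nonempty_of_ne_empty hAne, hAcard⟩
  have hVB : V = V ∩ W i := by
    conv_lhs => rw [← hABV, hAe, empty_union]
  refine ⟨i, ?_⟩
  rw [hVB]
  by_contra hne'
  have hBss : V ∩ W i ⊂ W i := Finset.ssubset_iff_subset_ne.mpr ⟨inter_subset_right, hne'⟩
  exact (hHP.2.2.2.1 i).2 _ hBss ⟨hVB ▸ hVne, hBcard⟩
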